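/- arXiv:2604.25144 — 2 statements merged into one kernel-verified Lean document; each statement's English description precedes it below -/
import Mathlib

section
/- Let d ≥ 1, let Ω ⊆ ℝ^d be a bounded open set, let b > 0 and p > 1 be real, and let ρ : ℝ^d → ℝ be a C² function such that ‖∇ρ(x)‖ ≤ 1 and Δρ(x) ≥ b for every x ∈ Ω. Then for every nonnegative f ∈ C_c^∞(Ω), one has ∫_Ω ‖∇f(x)‖^p dx ≥ (b/p)^p · ∫_Ω f(x)^p dx. -/
open MeasureTheory

/-- The Euclidean Laplacian: the sum of the second partial derivatives. -/
noncomputable def eucLap {d : ℕ} (f : EuclideanSpace ℝ (Fin d) → ℝ) :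
    EuclideanSpace ℝ (Fin d) → ℝ := fun x =>
  ∑ i, fderiv ℝ (fun y => fderiv ℝ f y (EuclideanSpace.single i 1)) x
    (EuclideanSpace.single i 1)

set_option maxHeartbeats 1600000 in
/-- Poincaré-type inequality from an auxiliary function `ρ` with
`‖∇ρ‖ ≤ 1` and `Δρ ≥ b` on a bounded open set `Ω ⊆ ℝ^d`:
for nonnegative `f ∈ C_c^∞(Ω)`, `∫_Ω ‖∇f‖^p ≥ (b/p)^p ∫_Ω f^p`. -/
theorem stmt1 (d : ℕ) (hd : 1 ≤ d)
    (Ω : Set (EuclideanSpace ℝ (Fin d))) (hΩo : IsOpen Ω)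
    (hΩb : Bornology.IsBounded Ω)
    (b p : ℝ) (hb : 0 < b) (hp : 1 < p)
    (ρ : EuclideanSpace ℝ (Fin d) → ℝ) (hρ : ContDiff ℝ 2 ρ)
    (hgrad : ∀ x ∈ Ω, ‖gradient ρ x‖ ≤ 1)
    (hlap : ∀ x ∈ Ω, b ≤ eucLap ρ x)
    (f : EuclideanSpace ℝ (Fin d) → ℝ) (hf : ContDiff ℝ (⊤ : ℕ∞) f)
    (hfc : HasCompactSupport f) (hfΩ : tsupport f ⊆ Ω)
    (hfpos : ∀ x, 0 ≤ f x) :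
    (b / p) ^ p * ∫ x in Ω, f x ^ p ≤ ∫ x in Ω, ‖gradient f x‖ ^ p := by
  have hp0 : (0:ℝ) < p := lt_trans one_pos hp
  have hp1 : (0:ℝ) < p - 1 := by linarith
  -- reduce the set integrals to integrals over the whole space
  have hfzero : ∀ x ∉ Ω, f x = 0 := fun x hx =>
    image_eq_zero_of_notMem_tsupport (fun h => hx (hfΩ h))
  have hgradfzero : ∀ x ∉ Ω, gradient f x = 0 := by
    intro x hx
    have h0 : fderiv ℝ f x = 0 := by
      by_contra h
      exact hx (hfΩ (support_fderiv_subset ℝ (Function.mem_support.mpr h)))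
    show (InnerProductSpace.toDual ℝ _).symm (fderiv ℝ f x) = 0
    rw [h0, map_zero]
  rw [setIntegral_eq_integral_of_forall_compl_eq_zero (fun x hx => by
        rw [hfzero x hx, Real.zero_rpow hp0.ne']),
      setIntegral_eq_integral_of_forall_compl_eq_zero (fun x hx => by
        rw [hgradfzero x hx, norm_zero, Real.zero_rpow hp0.ne'])]
  -- cutoff function χ, equal to 1 near `tsupport f`, with compact support inside `Ω`
  obtain ⟨K, hKc, hKi, hKΩ⟩ := exists_compact_between hfc hΩo hfΩ
  obtain ⟨χ₀, hχ1', hχ0, hχ01⟩ :=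
    exists_contMDiffMap_one_nhds_of_subset_interior (modelWithCornersSelf ℝ (EuclideanSpace ℝ (Fin d))) (n := (⊤ : ℕ∞))
      (isClosed_tsupport f) hKi
  have hχs : ContDiff ℝ 2 (χ₀ : EuclideanSpace ℝ (Fin d) → ℝ) := by
    have h := contMDiff_iff_contDiff.mp χ₀.contMDiff
    exact h.of_le (WithTop.coe_le_coe.mpr le_top)
  obtain ⟨U, hUo, hfU, hU1⟩ := eventually_nhdsSet_iff_exists.mp hχ1'
  set ρ' : EuclideanSpace ℝ (Fin d) → ℝ := fun x => χ₀ x * ρ x with hρ'def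
  have hρ'2 : ContDiff ℝ 2 ρ' := hχs.mul hρ
  have hχc : HasCompactSupport (χ₀ : EuclideanSpace ℝ (Fin d) → ℝ) :=
    HasCompactSupport.intro hKc hχ0
  have hρ'c : HasCompactSupport ρ' := hχc.mul_right
  have hUeq : ∀ y ∈ U, ρ' y = ρ y := fun y hy => by
    simp only [hρ'def, hU1 y hy, one_mul]
  have hfe : ∀ y ∈ U, fderiv ℝ ρ' y = fderiv ℝ ρ y := fun y hy =>
    Filter.EventuallyEq.fderiv_eq
      (Filter.eventually_of_mem (hUo.mem_nhds hy) (fun z hz => hUeq z hz))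
  have hlapeq : ∀ y ∈ U, eucLap ρ' y = eucLap ρ y := by
    intro y hy
    unfold eucLap
    refine Finset.sum_congr rfl (fun i _ => ?_)
    have hev : (fun z => fderiv ℝ ρ' z (EuclideanSpace.single i 1)) =ᶠ[nhds y]
        (fun z => fderiv ℝ ρ z (EuclideanSpace.single i 1)) :=
      Filter.eventually_of_mem (hUo.mem_nhds hy) (fun z hz => by show fderiv ℝ ρ' z (EuclideanSpace.single i 1) = fderiv ℝ ρ z (EuclideanSpace.single i 1); rw [hfe z hz])
    rw [hev.fderiv_eq]
  -- the partial derivatives of ρ'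
  set F : Fin d → EuclideanSpace ℝ (Fin d) → ℝ :=
    fun i x => fderiv ℝ ρ' x (EuclideanSpace.single i 1) with hFdef
  have hF1 : ∀ i, ContDiff ℝ 1 (F i) := fun i =>
    (hρ'2.fderiv_right (by norm_num)).clm_apply contDiff_const
  have hFc : ∀ i, HasCompactSupport (F i) := fun i =>
    (hρ'c.fderiv ℝ).comp_left
      (g := fun L : EuclideanSpace ℝ (Fin d) →L[ℝ] ℝ => L (EuclideanSpace.single i 1)) rfl
  choose CF hCF using fun i =>
    ContDiff.lipschitzWith_of_hasCompactSupport (hFc i) (hF1 i) one_ne_zero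
  -- g = f ^ p
  set g : EuclideanSpace ℝ (Fin d) → ℝ := fun x => f x ^ p with hgdef
  have hgC : ContDiff ℝ 1 g := by
    have h1 : ContDiff ℝ ((1:ℕ) : WithTop ℕ∞) (fun t : ℝ => t ^ p) :=
      Real.contDiff_rpow_const_of_le (by exact_mod_cast hp.le)
    exact h1.comp (hf.of_le (by simp))
  have hgc : HasCompactSupport g :=
    hfc.comp_left (g := fun t : ℝ => t ^ p) (Real.zero_rpow hp0.ne')
  obtain ⟨Cg, hCg⟩ := ContDiff.lipschitzWith_of_hasCompactSupport hgc hgC one_ne_zero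
  have hgd : ∀ x, HasFDerivAt g ((p * f x ^ (p - 1)) • fderiv ℝ f x) x := fun x =>
    (Real.hasDerivAt_rpow_const (Or.inr hp.le)).comp_hasFDerivAt x
      (hf.differentiable (by simp) x).hasFDerivAt
  have hgfd : ∀ x, fderiv ℝ g x = (p * f x ^ (p - 1)) • fderiv ℝ f x := fun x => (hgd x).fderiv
  have hgrad_g : ∀ x, gradient g x = (p * f x ^ (p - 1)) • gradient f x := fun x => by
    show (InnerProductSpace.toDual ℝ _).symm (fderiv ℝ g x)
      = (p * f x ^ (p - 1)) • (InnerProductSpace.toDual ℝ _).symm (fderiv ℝ f x)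
    rw [hgfd x, _root_.map_smul]
  have hc_nonneg : ∀ x, 0 ≤ p * f x ^ (p - 1) := fun x =>
    mul_nonneg hp0.le (Real.rpow_nonneg (hfpos x) _)
  have hngrad_g : ∀ x, ‖gradient g x‖ = p * f x ^ (p - 1) * ‖gradient f x‖ := fun x => by
    rw [hgrad_g x, norm_smul, Real.norm_eq_abs, abs_of_nonneg (hc_nonneg x)]
  -- continuity facts
  have hcf : Continuous f := hf.continuous
  have hcgradf : Continuous (gradient f) := by
    have h := hf.continuous_fderiv (by simp)
    exact (InnerProductSpace.toDual ℝ _).symm.continuous.comp h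
  have hgradfc : HasCompactSupport (gradient f) :=
    (hfc.fderiv ℝ).comp_left (g := (InnerProductSpace.toDual ℝ _).symm) (map_zero _)
  have hcF : ∀ i, Continuous (F i) := fun i => (hF1 i).continuous
  have hcF' : ∀ i, Continuous (fun x => fderiv ℝ (F i) x (EuclideanSpace.single i 1)) :=
    fun i => ((hF1 i).continuous_fderiv one_ne_zero).clm_apply continuous_const
  have hcg : Continuous g := hgC.continuous
  have hcdg : ∀ i, Continuous (fun x => fderiv ℝ g x (EuclideanSpace.single i 1)) :=
    fun i => (hgC.continuous_fderiv one_ne_zero).clm_apply continuous_const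
  have hdgc : ∀ i, HasCompactSupport (fun x => fderiv ℝ g x (EuclideanSpace.single i 1)) :=
    fun i => (hgc.fderiv ℝ).comp_left
      (g := fun L : EuclideanSpace ℝ (Fin d) →L[ℝ] ℝ => L (EuclideanSpace.single i 1)) rfl
  -- integrability facts
  have int_fp : Integrable (fun x => f x ^ p) :=
    (hcf.rpow_const (fun x => Or.inr hp0.le)).integrable_of_hasCompactSupport hgc
  have int_term1 : ∀ i,
      Integrable (fun x => fderiv ℝ (F i) x (EuclideanSpace.single i 1) * g x) :=
    fun i => ((hcF' i).mul hcg).integrable_of_hasCompactSupport hgc.mul_left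
  have int_term2 : ∀ i,
      Integrable (fun x => fderiv ℝ g x (EuclideanSpace.single i 1) * F i x) :=
    fun i => ((hcdg i).mul (hcF i)).integrable_of_hasCompactSupport (hdgc i).mul_right
  have int_S : Integrable (fun x => ∑ i, fderiv ℝ g x (EuclideanSpace.single i 1) * F i x) :=
    integrable_finset_sum _ (fun i _ => int_term2 i)
  have contLap : Continuous (eucLap ρ') := by
    unfold eucLap
    exact continuous_finset_sum _ (fun i _ => hcF' i)
  have int_lapg : Integrable (fun x => eucLap ρ' x * g x) :=
    (contLap.mul hcg).integrable_of_hasCompactSupport hgc.mul_left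
  -- Step 1: b ∫ f^p ≤ ∫ (Δρ') f^p
  have step1 : b * ∫ x, f x ^ p ≤ ∫ x, eucLap ρ' x * g x := by
    rw [← integral_const_mul]
    refine integral_mono (int_fp.const_mul b) int_lapg (fun x => ?_)
    by_cases hfx : f x = 0
    · have hgx : g x = 0 := by simp [hgdef, hfx, Real.zero_rpow hp0.ne']
      show b * f x ^ p ≤ eucLap ρ' x * g x
      rw [hfx, Real.zero_rpow hp0.ne', hgx, mul_zero, mul_zero]
    · have hxsupp : x ∈ tsupport f := subset_tsupport f (Function.mem_support.mpr hfx)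
      have hxU : x ∈ U := hfU hxsupp
      have hxΩ : x ∈ Ω := hfΩ hxsupp
      have hble : b ≤ eucLap ρ' x := by rw [hlapeq x hxU]; exact hlap x hxΩ
      exact mul_le_mul_of_nonneg_right hble (Real.rpow_nonneg (hfpos x) p)
  -- Step 2: integration by parts
  have hlF : ∀ i (x : EuclideanSpace ℝ (Fin d)),
      lineDeriv ℝ (F i) x (EuclideanSpace.single i 1)
        = fderiv ℝ (F i) x (EuclideanSpace.single i 1) := fun i x =>
    ((hF1 i).differentiable one_ne_zero x).lineDeriv_eq_fderiv
  have hlg : ∀ (x : EuclideanSpace ℝ (Fin d)) (v), lineDeriv ℝ g x v = fderiv ℝ g x v :=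
    fun x v => (hgd x).differentiableAt.lineDeriv_eq_fderiv
  have step2 : ∫ x, eucLap ρ' x * g x
      = - ∫ x, ∑ i, fderiv ℝ g x (EuclideanSpace.single i 1) * F i x := by
    have e0 : (fun x => eucLap ρ' x * g x)
        = fun x => ∑ i, fderiv ℝ (F i) x (EuclideanSpace.single i 1) * g x := by
      funext x
      simp only [eucLap, Finset.sum_mul]
      rfl
    have e2 : ∀ i : Fin d, ∫ x, fderiv ℝ (F i) x (EuclideanSpace.single i 1) * g x
        = - ∫ x, fderiv ℝ g x (EuclideanSpace.single i 1) * F i x := by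
      intro i
      have h1 : ∫ x, fderiv ℝ (F i) x (EuclideanSpace.single i 1) * g x
          = ∫ x, lineDeriv ℝ (F i) x (EuclideanSpace.single i 1) * g x := by
        simp_rw [hlF]
      have h2 := LipschitzWith.integral_lineDeriv_mul_eq (μ := volume) (hCF i) hCg hgc
        (EuclideanSpace.single i 1)
      have h3 : ∫ x, lineDeriv ℝ g x (-(EuclideanSpace.single i 1)) * F i x
          = ∫ x, -(fderiv ℝ g x (EuclideanSpace.single i 1) * F i x) := by
        simp_rw [hlg, map_neg, neg_mul]
      rw [h1, h2, h3, integral_neg]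
    rw [e0, integral_finset_sum _ (fun i _ => int_term1 i),
      Finset.sum_congr rfl (fun i _ => e2 i), Finset.sum_neg_distrib,
      ← integral_finset_sum _ (fun i _ => int_term2 i)]
  -- Step 3: pointwise Cauchy-Schwarz bound
  have hcomp : ∀ (h : EuclideanSpace ℝ (Fin d) → ℝ) (x) (i : Fin d),
      fderiv ℝ h x (EuclideanSpace.single i 1) = gradient h x i := by
    intro h x i
    have h1 : (inner ℝ (gradient h x) (EuclideanSpace.single i (1:ℝ)) : ℝ)
        = fderiv ℝ h x (EuclideanSpace.single i 1) := by
      show (inner ℝ ((InnerProductSpace.toDual ℝ _).symm (fderiv ℝ h x))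
        (EuclideanSpace.single i (1:ℝ)) : ℝ) = _
      exact InnerProductSpace.toDual_symm_apply
    have h2 : (inner ℝ (gradient h x) (EuclideanSpace.single i (1:ℝ)) : ℝ)
        = 1 * (starRingEnd ℝ) (gradient h x i) := EuclideanSpace.inner_single_right _ _ _
    rw [← h1, h2]
    simp
  have key3 : ∀ x, -∑ i, fderiv ℝ g x (EuclideanSpace.single i 1) * F i x
      ≤ p * (f x ^ (p - 1) * ‖gradient f x‖) := by
    intro x
    have hsum : ∑ i, fderiv ℝ g x (EuclideanSpace.single i 1) * F i x
        = (inner ℝ (gradient g x) (gradient ρ' x) : ℝ) := by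
      rw [PiLp.inner_apply]
      refine Finset.sum_congr rfl (fun i _ => ?_)
      rw [hcomp g x i, show F i x = gradient ρ' x i from hcomp ρ' x i]
      simp [RCLike.inner_apply, mul_comm]
    by_cases hfx : f x = 0
    · have hz : fderiv ℝ g x = 0 := by
        rw [hgfd x, hfx, Real.zero_rpow (by linarith : p - 1 ≠ 0), mul_zero, zero_smul]
      have hz' : ∑ i, fderiv ℝ g x (EuclideanSpace.single i 1) * F i x = 0 := by
        simp [hz]
      rw [hz', hfx, Real.zero_rpow (by linarith : p - 1 ≠ 0)]
      simp
    · have hxsupp : x ∈ tsupport f := subset_tsupport f (Function.mem_support.mpr hfx)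
      have hxU : x ∈ U := hfU hxsupp
      have hxΩ : x ∈ Ω := hfΩ hxsupp
      have hρeq : gradient ρ' x = gradient ρ x := by
        show (InnerProductSpace.toDual ℝ _).symm (fderiv ℝ ρ' x)
          = (InnerProductSpace.toDual ℝ _).symm (fderiv ℝ ρ x)
        rw [hfe x hxU]
      calc -∑ i, fderiv ℝ g x (EuclideanSpace.single i 1) * F i x
          ≤ |∑ i, fderiv ℝ g x (EuclideanSpace.single i 1) * F i x| := neg_le_abs _
        _ = |(inner ℝ (gradient g x) (gradient ρ' x) : ℝ)| := by rw [hsum]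
        _ ≤ ‖gradient g x‖ * ‖gradient ρ' x‖ := abs_real_inner_le_norm _ _
        _ ≤ ‖gradient g x‖ * 1 := by
            refine mul_le_mul_of_nonneg_left ?_ (norm_nonneg _)
            rw [hρeq]; exact hgrad x hxΩ
        _ = p * (f x ^ (p - 1) * ‖gradient f x‖) := by
            rw [mul_one, hngrad_g x, mul_assoc]
  have int_rhs : Integrable (fun x => p * (f x ^ (p - 1) * ‖gradient f x‖)) := by
    apply Continuous.integrable_of_hasCompactSupport
    · exact continuous_const.mul ((hcf.rpow_const (fun x => Or.inr hp1.le)).mul hcgradf.norm)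
    · exact (hgradfc.norm.mul_left).mul_left
  have step3 : (- ∫ x, ∑ i, fderiv ℝ g x (EuclideanSpace.single i 1) * F i x)
      ≤ ∫ x, p * (f x ^ (p - 1) * ‖gradient f x‖) := by
    rw [← integral_neg]
    exact integral_mono int_S.neg int_rhs (fun x => key3 x)
  -- Step 4: Hölder
  set q : ℝ := p / (p - 1) with hqdef
  have hqp : Real.HolderConjugate q p := (Real.HolderConjugate.conjExponent hp).symm
  have hmemφ : MemLp (fun x => f x ^ (p - 1)) (ENNReal.ofReal q) volume :=
    (hcf.rpow_const (fun x => Or.inr hp1.le)).memLp_of_hasCompactSupport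
      (hfc.comp_left (g := fun t : ℝ => t ^ (p - 1)) (Real.zero_rpow (by linarith)))
  have hmemψ : MemLp (fun x => ‖gradient f x‖) (ENNReal.ofReal p) volume :=
    hcgradf.norm.memLp_of_hasCompactSupport hgradfc.norm
  have holder := integral_mul_le_Lp_mul_Lq_of_nonneg hqp
    (Filter.Eventually.of_forall (fun x => Real.rpow_nonneg (hfpos x) _))
    (Filter.Eventually.of_forall (fun x => norm_nonneg _))
    hmemφ hmemψ
  have hφq : ∀ x : EuclideanSpace ℝ (Fin d), (f x ^ (p - 1)) ^ q = f x ^ p := by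
    intro x
    rw [← Real.rpow_mul (hfpos x)]
    congr 1
    rw [hqdef, mul_comm, div_mul_cancel₀ _ (by linarith : p - 1 ≠ 0)]
  -- combine
  set I := ∫ x, f x ^ p with hIdef
  set Kk := ∫ x, ‖gradient f x‖ ^ p with hKdef
  have hI0 : 0 ≤ I := integral_nonneg (fun x => Real.rpow_nonneg (hfpos x) p)
  have hK0 : 0 ≤ Kk := integral_nonneg (fun x => Real.rpow_nonneg (norm_nonneg _) p)
  have main : b * I ≤ p * (I ^ (1/q) * Kk ^ (1/p)) := by
    calc b * I ≤ ∫ x, eucLap ρ' x * g x := step1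
      _ = - ∫ x, ∑ i, fderiv ℝ g x (EuclideanSpace.single i 1) * F i x := step2
      _ ≤ ∫ x, p * (f x ^ (p - 1) * ‖gradient f x‖) := step3
      _ = p * ∫ x, f x ^ (p - 1) * ‖gradient f x‖ := integral_const_mul p _
      _ ≤ p * ((∫ x, (f x ^ (p - 1)) ^ q) ^ (1/q) * (∫ x, ‖gradient f x‖ ^ p) ^ (1/p)) :=
          mul_le_mul_of_nonneg_left holder hp0.le
      _ = p * (I ^ (1/q) * Kk ^ (1/p)) := by
          have hIq : (∫ x, (f x ^ (p - 1)) ^ q) = I := by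
            simp_rw [hφq]
            rfl
          rw [hIq]
  have h1q : 1/q = 1 - 1/p := by
    rw [hqdef, one_div_div, sub_div, div_self hp0.ne']
  rcases hI0.eq_or_lt with hI | hI
  · rw [← hI, mul_zero]
    exact hK0
  · have hIp : 0 < I ^ (1 - 1/p) := Real.rpow_pos_of_pos hI _
    have main' : b * I ≤ p * (I ^ (1 - 1/p) * Kk ^ (1/p)) := by rw [← h1q]; exact main
    have hsplit : I = I ^ (1 - 1/p) * I ^ (1/p) := by
      rw [← Real.rpow_add hI, sub_add_cancel, Real.rpow_one]
    have key : b * I ^ (1/p) ≤ p * Kk ^ (1/p) := by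
      have h2 : I ^ (1 - 1/p) * (b * I ^ (1/p)) ≤ I ^ (1 - 1/p) * (p * Kk ^ (1/p)) := by
        calc I ^ (1 - 1/p) * (b * I ^ (1/p)) = b * (I ^ (1 - 1/p) * I ^ (1/p)) := by ring
          _ = b * I := by rw [← hsplit]
          _ ≤ p * (I ^ (1 - 1/p) * Kk ^ (1/p)) := main'
          _ = I ^ (1 - 1/p) * (p * Kk ^ (1/p)) := by ring
      exact le_of_mul_le_mul_left h2 hIp
    have key2 : (b/p) * I ^ (1/p) ≤ Kk ^ (1/p) := by
      rw [div_mul_eq_mul_div, div_le_iff₀ hp0]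
      calc b * I ^ (1/p) ≤ p * Kk ^ (1/p) := key
        _ = Kk ^ (1/p) * p := by ring
    have key4 : ((b/p) * I ^ (1/p)) ^ p ≤ (Kk ^ (1/p)) ^ p :=
      Real.rpow_le_rpow (mul_nonneg (div_nonneg hb.le hp0.le) (Real.rpow_nonneg hI0 _)) key2 hp0.le
    rw [Real.mul_rpow (div_nonneg hb.le hp0.le) (Real.rpow_nonneg hI0 _),
      ← Real.rpow_mul hI0, ← Real.rpow_mul hK0,
      one_div_mul_cancel hp0.ne', Real.rpow_one, Real.rpow_one] at key4
    exact key4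
end

section
/- Let d ≥ 1, let Ω ⊆ ℝ^d be a bounded open set, let b > 0 be real, and let ρ : ℝ^d → ℝ be a C² function such that ‖∇ρ(x)‖ ≤ 1 and Δρ(x) ≥ b for every x ∈ Ω. Then for every f ∈ C_c^∞(Ω) (of arbitrary sign), one has ∫_Ω ‖∇f(x)‖² dx ≥ (b²/4) · ∫_Ω f(x)² dx. -/
open MeasureTheory

section aux

open InnerProductSpace

variable {d : ℕ}

local notation "𝔼" => EuclideanSpace ℝ (Fin d)

lemma grad_inner (q : 𝔼 → ℝ) (x v : 𝔼) :
    (inner ℝ (gradient q x) v : ℝ) = fderiv ℝ q x v := by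
  rw [gradient]; exact toDual_symm_apply

lemma gradient_continuous {q : 𝔼 → ℝ} {n : WithTop ℕ∞} (hq : ContDiff ℝ n q) (hn : 1 ≤ n) :
    Continuous (gradient q) :=
  (toDual ℝ 𝔼).symm.continuous.comp (hq.continuous_fderiv (ENat.one_le_iff_ne_zero_withTop.mp hn))

lemma sum_coord_inner (u v : 𝔼) :
    ∑ i, (inner ℝ u (EuclideanSpace.single i 1) : ℝ) *
      (inner ℝ v (EuclideanSpace.single i 1) : ℝ) = (inner ℝ u v : ℝ) := by
  have h := (EuclideanSpace.basisFun (Fin d) ℝ).sum_inner_mul_inner u v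
  simp only [EuclideanSpace.basisFun_apply] at h
  rw [← h]
  refine Finset.sum_congr rfl fun i _ => ?_
  rw [real_inner_comm v]

end aux

set_option maxHeartbeats 1000000 in
/-- the L² Poincaré-type inequality from an auxiliary function `ρ` with
`‖∇ρ‖ ≤ 1` and `Δρ ≥ b` on a bounded open set `Ω ⊆ ℝ^d`: for every
`f ∈ C_c^∞(Ω)` (of arbitrary sign), `∫_Ω ‖∇f‖² ≥ (b²/4) ∫_Ω f²`. -/
theorem stmt2 (d : ℕ) (hd : 1 ≤ d)
    (Ω : Set (EuclideanSpace ℝ (Fin d))) (hΩo : IsOpen Ω)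
    (hΩb : Bornology.IsBounded Ω)
    (b : ℝ) (hb : 0 < b)
    (ρ : EuclideanSpace ℝ (Fin d) → ℝ) (hρ : ContDiff ℝ 2 ρ)
    (hgrad : ∀ x ∈ Ω, ‖gradient ρ x‖ ≤ 1)
    (hlap : ∀ x ∈ Ω, b ≤ eucLap ρ x)
    (f : EuclideanSpace ℝ (Fin d) → ℝ) (hf : ContDiff ℝ (⊤ : ℕ∞) f)
    (hfc : HasCompactSupport f) (hfΩ : tsupport f ⊆ Ω) :
    b ^ 2 / 4 * ∫ x in Ω, f x ^ 2 ≤ ∫ x in Ω, ‖gradient f x‖ ^ 2 := by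
  classical
  set e : Fin d → EuclideanSpace ℝ (Fin d) := fun i => EuclideanSpace.single i 1 with he
  set g : EuclideanSpace ℝ (Fin d) → ℝ := fun y => f y * f y with hgdef
  have hfd : Differentiable ℝ f := hf.differentiable (by simp)
  have hgsm : ContDiff ℝ (⊤ : ℕ∞) g := hf.mul hf
  have hgd : Differentiable ℝ g := hgsm.differentiable (by simp)
  have hgc : HasCompactSupport g := hfc.mul_right
  -- the partial derivatives of ρ
  have hρ1 : ContDiff ℝ 1 (fderiv ℝ ρ) := hρ.fderiv_right (by norm_num)
  have hDρ : ∀ i, ContDiff ℝ 1 (fun y => fderiv ℝ ρ y (e i)) := fun i =>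
    (ContinuousLinearMap.apply ℝ ℝ (e i)).contDiff.comp hρ1
  -- continuity facts
  have hgcont : Continuous g := hgsm.continuous
  have hDρc : ∀ i, Continuous (fun y => fderiv ℝ ρ y (e i)) := fun i => (hDρ i).continuous
  have hDDρc : ∀ i, Continuous (fun y => fderiv ℝ (fun z => fderiv ℝ ρ z (e i)) y (e i)) :=
    fun i => ((hDρ i).continuous_fderiv one_ne_zero).clm_apply continuous_const
  have hDgc : ∀ i, Continuous (fun y => fderiv ℝ g y (e i)) :=
    fun i => ((hgsm.continuous_fderiv (by simp)).clm_apply continuous_const)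
  have hDgsupp : ∀ i, HasCompactSupport (fun y => fderiv ℝ g y (e i)) := fun i =>
    (hgc.fderiv ℝ).comp_left (g := fun L : _ →L[ℝ] ℝ => L (e i)) rfl
  -- integration by parts in each coordinate
  have key : ∀ i : Fin d,
      ∫ x, g x * fderiv ℝ (fun y => fderiv ℝ ρ y (e i)) x (e i)
        = - ∫ x, fderiv ℝ g x (e i) * fderiv ℝ ρ x (e i) := by
    intro i
    apply integral_mul_fderiv_eq_neg_fderiv_mul_of_integrable
    · exact ((hDgc i).mul (hDρc i)).integrable_of_hasCompactSupport
        ((hDgsupp i).mul_right)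
    · exact (hgcont.mul (hDDρc i)).integrable_of_hasCompactSupport (hgc.mul_right)
    · exact (hgcont.mul (hDρc i)).integrable_of_hasCompactSupport (hgc.mul_right)
    · exact fun x _ => hgd x
    · exact fun x _ => (hDρ i).differentiable one_ne_zero x
  -- pointwise derivative of g
  have hDg : ∀ x v, fderiv ℝ g x v = 2 * f x * fderiv ℝ f x v := by
    intro x v
    rw [hgdef, fderiv_fun_mul (hfd x) (hfd x)]
    simp
    ring
  -- integrability of the main integrands
  have int_g : Integrable g := hgcont.integrable_of_hasCompactSupport hgc
  have int_glap : Integrable (fun x => g x * eucLap ρ x) := by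
    refine (hgcont.mul ?_).integrable_of_hasCompactSupport hgc.mul_right
    exact continuous_finset_sum _ fun i _ => hDDρc i
  have hgradf_cont : Continuous (gradient f) := gradient_continuous hf (by simp)
  have hgradρ_cont : Continuous (gradient ρ) := gradient_continuous hρ (by norm_num)
  have hgradf_supp : HasCompactSupport (gradient f) :=
    (hfc.fderiv ℝ).comp_left (by simp [gradient])
  have int_n2 : Integrable (fun x => ‖gradient f x‖ ^ 2) :=
    ((hgradf_cont.norm.pow 2)).integrable_of_hasCompactSupport
      (by
        have s1 : HasCompactSupport (fun x => ‖gradient f x‖ ^ 2) :=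
          hgradf_supp.comp_left (g := fun z : EuclideanSpace ℝ (Fin d) => ‖z‖ ^ 2) (by rw [norm_zero]; ring)
        exact s1)
  have int_inner : Integrable
      (fun x => 2 * f x * (inner ℝ (gradient f x) (gradient ρ x) : ℝ)) := by
    refine Continuous.integrable_of_hasCompactSupport ?_ ?_
    · exact ((continuous_const.mul hf.continuous).mul
        (hgradf_cont.inner hgradρ_cont))
    · apply HasCompactSupport.mul_right
      exact (hfc.comp_left (g := fun t : ℝ => 2 * t) (by simp))
  -- the divergence identity:  ∫ g Δρ = - ∫ 2 f ⟪∇f, ∇ρ⟫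
  have div_id : ∫ x, g x * eucLap ρ x
      = - ∫ x, 2 * f x * (inner ℝ (gradient f x) (gradient ρ x) : ℝ) := by
    have step1 : ∫ x, g x * eucLap ρ x
        = ∑ i, ∫ x, g x * fderiv ℝ (fun y => fderiv ℝ ρ y (e i)) x (e i) := by
      rw [← integral_finset_sum]
      · congr 1
        ext x
        rw [eucLap, Finset.mul_sum]
      · intro i _
        exact (hgcont.mul (hDDρc i)).integrable_of_hasCompactSupport hgc.mul_right
    rw [step1]
    have step2 : ∀ i ∈ Finset.univ, ∫ x, g x * fderiv ℝ (fun y => fderiv ℝ ρ y (e i)) x (e i)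
        = - ∫ x, fderiv ℝ g x (e i) * fderiv ℝ ρ x (e i) := fun i _ => key i
    rw [Finset.sum_congr rfl step2, Finset.sum_neg_distrib, ← integral_finset_sum]
    · rw [neg_inj]
      congr 1
      funext x
      have : ∑ i, fderiv ℝ g x (e i) * fderiv ℝ ρ x (e i)
          = 2 * f x * (inner ℝ (gradient f x) (gradient ρ x) : ℝ) := by
        have : ∀ i, fderiv ℝ g x (e i) * fderiv ℝ ρ x (e i)
            = 2 * f x * ((inner ℝ (gradient f x) (e i) : ℝ) *
              (inner ℝ (gradient ρ x) (e i) : ℝ)) := by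
          intro i
          rw [hDg, grad_inner, grad_inner]
          ring
        rw [Finset.sum_congr rfl fun i _ => this i, ← Finset.mul_sum, he]
        rw [sum_coord_inner]
      rw [this]
    · intro i _
      exact ((hDgc i).mul (hDρc i)).integrable_of_hasCompactSupport (hDgsupp i).mul_right
  -- vanishing off Ω
  have hout : ∀ x, x ∉ Ω → f x = 0 := fun x hx =>
    image_eq_zero_of_notMem_tsupport (fun hmem => hx (hfΩ hmem))
  have houtg : ∀ x, x ∉ Ω → gradient f x = 0 := by
    intro x hx
    have : fderiv ℝ f x = 0 := fderiv_of_notMem_tsupport _ (fun hmem => hx (hfΩ hmem))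
    simp [gradient, this]
  -- inequality 1 : b ∫ g ≤ ∫ g Δρ
  have ineq1 : b * ∫ x, g x ≤ ∫ x, g x * eucLap ρ x := by
    rw [← integral_const_mul]
    apply integral_mono (int_g.const_mul b) int_glap
    intro x
    dsimp only
    by_cases hx : x ∈ Ω
    · have h0 : 0 ≤ g x := by rw [hgdef]; exact mul_self_nonneg _
      calc b * g x = g x * b := by ring
        _ ≤ g x * eucLap ρ x := mul_le_mul_of_nonneg_left (hlap x hx) h0
    · simp [hgdef, hout x hx]
  -- inequality 2 : - ∫ 2 f ⟪∇f,∇ρ⟫ ≤ ∫ (b/2 g + 2/b ‖∇f‖²)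
  have ineq2 : - ∫ x, 2 * f x * (inner ℝ (gradient f x) (gradient ρ x) : ℝ)
      ≤ ∫ x, (b / 2 * g x + 2 / b * ‖gradient f x‖ ^ 2) := by
    rw [← integral_neg]
    apply integral_mono int_inner.neg ((int_g.const_mul _).add (int_n2.const_mul _))
    intro x
    simp only [Pi.neg_apply, Pi.add_apply]
    by_cases hx : x ∈ Ω
    · have h1 : |(inner ℝ (gradient f x) (gradient ρ x) : ℝ)|
          ≤ ‖gradient f x‖ * ‖gradient ρ x‖ := abs_real_inner_le_norm _ _
      have h2 : ‖gradient ρ x‖ ≤ 1 := hgrad x hx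
      have h3 : (0:ℝ) ≤ ‖gradient f x‖ := norm_nonneg _
      have h4 : |(inner ℝ (gradient f x) (gradient ρ x) : ℝ)| ≤ ‖gradient f x‖ := by
        calc |(inner ℝ (gradient f x) (gradient ρ x) : ℝ)|
            ≤ ‖gradient f x‖ * ‖gradient ρ x‖ := h1
          _ ≤ ‖gradient f x‖ * 1 := mul_le_mul_of_nonneg_left h2 h3
          _ = ‖gradient f x‖ := mul_one _
      have h5 : -(2 * f x * (inner ℝ (gradient f x) (gradient ρ x) : ℝ))
          ≤ 2 * |f x| * ‖gradient f x‖ := by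
        calc -(2 * f x * (inner ℝ (gradient f x) (gradient ρ x) : ℝ))
            ≤ |2 * f x * (inner ℝ (gradient f x) (gradient ρ x) : ℝ)| := neg_le_abs _
          _ = 2 * |f x| * |(inner ℝ (gradient f x) (gradient ρ x) : ℝ)| := by
              rw [abs_mul, abs_mul, abs_two]
          _ ≤ 2 * |f x| * ‖gradient f x‖ := by
              apply mul_le_mul_of_nonneg_left h4
              positivity
      have h6 : 2 * |f x| * ‖gradient f x‖
          ≤ b / 2 * g x + 2 / b * ‖gradient f x‖ ^ 2 := by
        have hg : g x = |f x| ^ 2 := by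
          show f x * f x = |f x| ^ 2
          rw [sq_abs]; ring
        rw [hg]
        have h7 : (0:ℝ) ≤ |f x| := abs_nonneg _
        have hbne : b ≠ 0 := ne_of_gt hb
        have h8 : b * (2 * |f x| * ‖gradient f x‖)
            ≤ b * (b / 2 * |f x| ^ 2 + 2 / b * ‖gradient f x‖ ^ 2) := by
          have heq : b * (b / 2 * |f x| ^ 2 + 2 / b * ‖gradient f x‖ ^ 2)
              = b ^ 2 / 2 * |f x| ^ 2 + 2 * ‖gradient f x‖ ^ 2 := by
            field_simp
          rw [heq]
          nlinarith [sq_nonneg (b * |f x| - 2 * ‖gradient f x‖)]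
        exact le_of_mul_le_mul_left h8 hb
      linarith
    · rw [hout x hx]
      have h0 : (0:ℝ) ≤ g x := mul_self_nonneg _
      have hz : -(2 * (0:ℝ) * (inner ℝ (gradient f x) (gradient ρ x) : ℝ)) = 0 := by ring
      rw [hz]
      exact add_nonneg (mul_nonneg (by positivity) h0) (by positivity)
  have expand : ∫ x, (b / 2 * g x + 2 / b * ‖gradient f x‖ ^ 2)
      = b / 2 * (∫ x, g x) + 2 / b * (∫ x, ‖gradient f x‖ ^ 2) := by
    rw [integral_add (int_g.const_mul _) (int_n2.const_mul _),
      integral_const_mul, integral_const_mul]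
  -- combine
  have main : b / 2 * (∫ x, g x) ≤ 2 / b * (∫ x, ‖gradient f x‖ ^ 2) := by
    have t2 : ∫ x, g x * eucLap ρ x
        ≤ ∫ x, (b / 2 * g x + 2 / b * ‖gradient f x‖ ^ 2) := by
      rw [div_id]; exact ineq2
    have t3 := ineq1.trans t2
    rw [expand] at t3
    have hsplit : b * (∫ x, g x) = 2 * (b / 2 * (∫ x, g x)) := by ring
    linarith
  -- identify set integrals with full integrals
  have hIg : ∫ x in Ω, f x ^ 2 = ∫ x, g x := by
    rw [show (fun x => g x) = fun x => f x ^ 2 by ext x; rw [hgdef]; ring]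
    exact setIntegral_eq_integral_of_forall_compl_eq_zero
      (fun x hx => by rw [hout x hx]; ring)
  have hIn : ∫ x in Ω, ‖gradient f x‖ ^ 2 = ∫ x, ‖gradient f x‖ ^ 2 :=
    setIntegral_eq_integral_of_forall_compl_eq_zero
      (fun x hx => by rw [houtg x hx]; simp)
  rw [hIg, hIn]
  calc b ^ 2 / 4 * (∫ x, g x) = b / 2 * (b / 2 * (∫ x, g x)) := by ring
    _ ≤ b / 2 * (2 / b * (∫ x, ‖gradient f x‖ ^ 2)) :=
        mul_le_mul_of_nonneg_left main (by positivity)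
    _ = ∫ x, ‖gradient f x‖ ^ 2 := by
        rw [← mul_assoc]
        have hbne : b ≠ 0 := ne_of_gt hb
        have : b / 2 * (2 / b) = 1 := by field_simp
        rw [this, one_mul]
end
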